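/- Let G be a strongly connected finite directed graph without loops with sink s. Starting from a rotor configuration T_0 ∈ Rec(G) with a chip at x_0, let T_k and x_k be the rotor configuration and chip location after k rotor-router steps. If T_k ∉ Rec(G), then T_k ∈ Cyc_{x_k}(G); that is, T_k contains an oriented cycle, and every oriented cycle in T_k passes through the rotor at the current chip location x_k (deleting the rotor T_k(x_k) leaves no oriented cycles). -/

import Mathlib

/-- A finite directed multigraph without loops, together with a distinguished
sink vertex and, for each vertex `x`, a cyclic ordering of the edges emanating
from `x`: the outgoing edges at `x` are indexed by `ZMod (deg x)` (in cyclic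
order), and `head x e` is the target of the edge `e`. -/
structure RotorGraph (V : Type*) [Fintype V] [DecidableEq V] where
  sink : V
  deg : V → ℕ
  deg_pos : ∀ x, 0 < deg x
  head : ∀ x : V, ZMod (deg x) → V
  no_loops : ∀ x e, head x e ≠ x

namespace RotorGraph

variable {V : Type*} [Fintype V] [DecidableEq V] (G : RotorGraph V)

/-- `x` is adjacent to `y` if some edge goes from `x` to `y`. -/
def Adj (x y : V) : Prop := ∃ e, G.head x e = y

/-- `G` is strongly connected: every vertex has a directed path to every vertex. -/
def StronglyConnected : Prop := ∀ x y : V, Relation.ReflTransGen G.Adj x y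

/-- A rotor configuration: each vertex carries a rotor pointing along one of
its outgoing edges.  (The value at the sink is irrelevant: it is never read
nor modified by the rotor-router walk.) -/
abbrev Conf := ∀ x : V, ZMod (G.deg x)

/-- One step of rotor-router walk for the state (rotor configuration, chip
location): if the chip is not at the sink, first increment the rotor at the
chip's location to the next edge in the cyclic ordering, then move the chip
along this new edge.  States whose chip is at the sink are absorbing. -/
def step (p : G.Conf × V) : G.Conf × V :=
  if p.2 = G.sink then p
  else (Function.update p.1 p.2 (p.1 p.2 + 1), G.head p.2 (p.1 p.2 + 1))

/-- The target of the rotor at `x`. -/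
def next (T : G.Conf) (x : V) : V := G.head x (T x)

/-- The rotors of `T` contain an oriented cycle all of whose vertices lie in `A`. -/
def HasCycleIn (T : G.Conf) (A : Set V) : Prop :=
  ∃ (m : ℕ) (x : V), 0 < m ∧ (∀ i < m, (G.next T)^[i] x ∈ A) ∧ (G.next T)^[m] x = x

/-- `T ∈ Rec(G)`: the rotors at the non-sink vertices form no oriented cycle,
i.e. they form an oriented spanning tree rooted at the sink. -/
def Rec (T : G.Conf) : Prop := ¬ G.HasCycleIn T {y | y ≠ G.sink}

/-- `e_x(T)`: start a chip at `x` and let it perform rotor-router walk until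
it first reaches the sink; `chip x T` is the resulting rotor configuration. -/
noncomputable def chip (x : V) (T : G.Conf) : G.Conf :=
  haveI := Classical.dec (∃ n, (G.step^[n] (T, x)).2 = G.sink)
  if h : ∃ n, (G.step^[n] (T, x)).2 = G.sink then (G.step^[Nat.find h] (T, x)).1 else T

/-- `T ∈ Cyc_x(G)`: the rotors contain an oriented cycle, and deleting the
rotor at `x` leaves no oriented cycle (equivalently, every oriented cycle of
`T` passes through `x`). -/
def Cyc (x : V) (T : G.Conf) : Prop :=
  G.HasCycleIn T {y | y ≠ G.sink} ∧ ¬ G.HasCycleIn T {y | y ≠ G.sink ∧ y ≠ x}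

variable {G}

theorem HasCycleIn.mono {T : G.Conf} {A B : Set V} (h : G.HasCycleIn T A) (hAB : A ⊆ B) :
    G.HasCycleIn T B := by
  obtain ⟨m, z, hm, hA, hz⟩ := h
  exact ⟨m, z, hm, fun i hi => hAB (hA i hi), hz⟩

theorem HasCycleIn.of_eqOn {T T' : G.Conf} {A : Set V} (h : G.HasCycleIn T A)
    (hTT' : Set.EqOn (G.next T) (G.next T') A) : G.HasCycleIn T' A := by
  obtain ⟨m, z, hm, hA, hz⟩ := h
  have hiter : ∀ i ≤ m, (G.next T')^[i] z = (G.next T)^[i] z := by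
    intro i hi
    induction i with
    | zero => rfl
    | succ j ih =>
      rw [Function.iterate_succ_apply', Function.iterate_succ_apply', ih (by omega),
        hTT' (hA j (by omega))]
  exact ⟨m, z, hm, fun i hi => hiter i hi.le ▸ hA i hi, (hiter m le_rfl).trans hz⟩

theorem HasCycleIn.inter {T : G.Conf} {A B : Set V} (h : G.HasCycleIn T A)
    (hB : ∀ y ∈ A, G.next T y ∈ A → y ∈ B) : G.HasCycleIn T (A ∩ B) := by
  obtain ⟨m, z, hm, hA, hz⟩ := h
  refine ⟨m, z, hm, fun i hi => ⟨hA i hi, hB _ (hA i hi) ?_⟩, hz⟩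
  rw [← Function.iterate_succ_apply' (G.next T)]
  rcases (Nat.succ_le_of_lt hi).lt_or_eq with hlt | heq
  · exact hA _ hlt
  · rw [heq, hz]
    exact hA 0 hm

theorem step_of_ne_sink {T : G.Conf} {x : V} (hx : x ≠ G.sink) :
    G.step (T, x) = (Function.update T x (T x + 1), G.head x (T x + 1)) :=
  if_neg hx

/-- The invariant "every cycle of rotors passes through the chip" survives a step: the only
rotor that changes now points at the chip's new location, so a cycle avoiding that location
avoids the old one as well and was already present before. -/
theorem not_hasCycleIn_step {p : G.Conf × V}
    (hp : ¬ G.HasCycleIn p.1 {y | y ≠ G.sink ∧ y ≠ p.2}) :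
    ¬ G.HasCycleIn (G.step p).1 {y | y ≠ G.sink ∧ y ≠ (G.step p).2} := by
  obtain ⟨T, x⟩ := p
  by_cases hx : x = G.sink
  · simpa [step, hx] using hp
  rw [step_of_ne_sink hx]
  intro hcyc
  have hnext_x : G.next (Function.update T x (T x + 1)) x = G.head x (T x + 1) := by
    simp [next]
  have hcyc' := hcyc.inter (B := {y | y ≠ x}) fun y hy hy' hyx => by
    subst hyx
    exact hy'.2 hnext_x
  refine hp ((hcyc'.of_eqOn fun y hy => ?_).mono fun y hy => ⟨hy.1.1, hy.2⟩)
  simp [next, Function.update_of_ne hy.2]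

theorem not_hasCycleIn_iterate_step {p : G.Conf × V}
    (hp : ¬ G.HasCycleIn p.1 {y | y ≠ G.sink ∧ y ≠ p.2}) (k : ℕ) :
    ¬ G.HasCycleIn (G.step^[k] p).1 {y | y ≠ G.sink ∧ y ≠ (G.step^[k] p).2} := by
  induction k with
  | zero => exact hp
  | succ n ih =>
    rw [Function.iterate_succ_apply']
    exact not_hasCycleIn_step ih

end RotorGraph

theorem stmt1_general {V : Type*} [Fintype V] [DecidableEq V] (G : RotorGraph V)
    (T0 : G.Conf) (x0 : V) (hT0 : G.Rec T0) (k : ℕ)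
    (h : ¬ G.Rec (G.step^[k] (T0, x0)).1) :
    G.Cyc (G.step^[k] (T0, x0)).2 (G.step^[k] (T0, x0)).1 :=
  ⟨not_not.mp h, RotorGraph.not_hasCycleIn_iterate_step
    (fun hcyc => hT0 (hcyc.mono fun _ hy => hy.1)) k⟩

/-- Lemma 2(i): starting from `T₀ ∈ Rec(G)` with a chip at `x₀`, if after `k`
rotor-router steps the configuration `T_k` is not in `Rec(G)`, then
`T_k ∈ Cyc_{x_k}(G)`, where `x_k` is the chip location after `k` steps. -/
theorem stmt1 {V : Type*} [Fintype V] [DecidableEq V] (G : RotorGraph V)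
    (hG : G.StronglyConnected) (T0 : G.Conf) (x0 : V) (hT0 : G.Rec T0) (k : ℕ)
    (h : ¬ G.Rec (G.step^[k] (T0, x0)).1) :
    G.Cyc (G.step^[k] (T0, x0)).2 (G.step^[k] (T0, x0)).1 :=
  stmt1_general G T0 x0 hT0 k h
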